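/- arXiv:2303.13628 — 2 statements merged into one kernel-verified Lean document; each statement's English description precedes it below -/
import Mathlib

section
/- For every real γ ≥ 10 there exist constants c₁, c₂ > 0 such that for all natural numbers j₀ ≥ 1 and j > j₀: c₁ · (j + j₀) · γ^(−(3j − j₀)/2) ≤ Σ γ^(−(s₊ + s₋)) ≤ c₂ · (j + j₀) · γ^(−(3j − j₀)/2), where the sum ranges over all pairs of natural numbers (s₊, s₋) with 2s₊ ≥ j − j₀, 2s₋ ≥ j − j₀, s₊ ≤ j, s₋ ≤ j, and 2(s₊ + s₋) ≥ 3j − j₀. -/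
/-!
Every sector has `s₊ + s₋ ≥ k₀ := ⌈(3j − j₀)/2⌉`, and `γ^(−k₀)` equals `γ^(−(3j−j₀)/2)` up to a
factor between `γ^(−1/2)` and `1`. For the upper bound, `s₊` takes at most `j + 1 ≤ j + j₀`
values, and for fixed `s₊` the values of `s₊ + s₋ ≥ k₀` contribute at most the geometric tail
`γ^(−k₀) / (1 − γ⁻¹)`. For the lower bound, the diagonal `s₊ + s₋ = k₀` alone already contains
`2j + 1 − k₀ ≥ (j + j₀)/2` sectors.
-/

open Finset

/-- The set of sector indices `σ = (s₊, s₋)` at shell scale `j` (with parameter `j₀`):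
`2 s₊ ≥ j − j₀`, `2 s₋ ≥ j − j₀`, `s₊ ≤ j`, `s₋ ≤ j` and `2(s₊ + s₋) ≥ 3 j − j₀`. -/
def sectorSet (j j₀ : ℕ) : Finset (ℕ × ℕ) :=
  (Finset.range (j + 1) ×ˢ Finset.range (j + 1)).filter
    (fun σ => j ≤ 2 * σ.1 + j₀ ∧ j ≤ 2 * σ.2 + j₀ ∧ 3 * j ≤ 2 * (σ.1 + σ.2) + j₀)

/-- `⌈(3j − j₀)/2⌉` when `j₀ ≤ 3j`; for `j₀ ≤ j` it is the least value of `s₊ + s₋` on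
`sectorSet j j₀`. -/
def minSectorSum (j j₀ : ℕ) : ℕ := (3 * j - j₀ + 1) / 2

section

variable {j j₀ : ℕ}

lemma mem_range_and_add_mem_Ico_of_mem_sectorSet {σ : ℕ × ℕ} (hσ : σ ∈ sectorSet j j₀) :
    σ.1 ∈ range (j + 1) ∧ σ.1 + σ.2 ∈ Ico (minSectorSum j j₀) (2 * j + 1) := by
  simp only [sectorSet, mem_filter, mem_product, mem_range] at hσ
  simp only [minSectorSum, mem_range, mem_Ico]
  omega

lemma mk_sub_mem_sectorSet (hj : j₀ ≤ j) {a : ℕ} (ha : a ∈ Icc (minSectorSum j j₀ - j) j) :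
    (a, minSectorSum j j₀ - a) ∈ sectorSet j j₀ := by
  simp only [sectorSet, minSectorSum, mem_Icc, mem_filter, mem_product, mem_range] at ha ⊢
  omega

lemma minSectorSum_cast_bounds (hj : j₀ ≤ 3 * j) :
    (3 * (j : ℝ) - j₀) / 2 ≤ minSectorSum j j₀ ∧
      (minSectorSum j j₀ : ℝ) ≤ (3 * (j : ℝ) - j₀) / 2 + 1 / 2 := by
  have h₁ : 3 * j - j₀ ≤ 2 * minSectorSum j j₀ := by unfold minSectorSum; omega
  have h₂ : 2 * minSectorSum j j₀ ≤ 3 * j - j₀ + 1 := by unfold minSectorSum; omega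
  have h₁' : (3 * j - j₀ : ℕ) ≤ (2 * minSectorSum j j₀ : ℝ) := by exact_mod_cast h₁
  have h₂' : (2 * minSectorSum j j₀ : ℝ) ≤ (3 * j - j₀ : ℕ) + 1 := by exact_mod_cast h₂
  push_cast [Nat.cast_sub hj] at h₁' h₂'
  constructor <;> linarith

variable {K : Type*} [Field K] [LinearOrder K] [IsStrictOrderedRing K] {r : K}

lemma half_add_mul_pow_le_sum_sectorSet (hr : 0 ≤ r) (hj : j₀ ≤ j) :
    ((j : K) + j₀) / 2 * r ^ minSectorSum j j₀ ≤ ∑ σ ∈ sectorSet j j₀, r ^ (σ.1 + σ.2) := by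
  set k := minSectorSum j j₀
  have hkj : j ≤ k := by unfold k minSectorSum; omega
  have hcard : ((j : K) + j₀) / 2 ≤ ((2 * j + 1 - k : ℕ) : K) := by
    rw [div_le_iff₀ two_pos]
    exact_mod_cast (show j + j₀ ≤ (2 * j + 1 - k) * 2 by unfold k minSectorSum; omega)
  have hinj : Set.InjOn (fun a => (a, k - a)) (Icc (k - j) j) := fun a _ b _ h => by
    simpa using congrArg Prod.fst h
  calc ((j : K) + j₀) / 2 * r ^ k ≤ ((2 * j + 1 - k : ℕ) : K) * r ^ k := by gcongr
    _ = ∑ a ∈ Icc (k - j) j, r ^ (a + (k - a)) := by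
        rw [sum_congr rfl fun a ha => by rw [Nat.add_sub_cancel' (by simp at ha; omega)],
          sum_const, Nat.card_Icc, nsmul_eq_mul, show j + 1 - (k - j) = 2 * j + 1 - k by omega]
    _ = ∑ σ ∈ (Icc (k - j) j).image (fun a => (a, k - a)), r ^ (σ.1 + σ.2) := by
        rw [sum_image hinj]
    _ ≤ ∑ σ ∈ sectorSet j j₀, r ^ (σ.1 + σ.2) := by
        refine sum_le_sum_of_subset_of_nonneg ?_ fun _ _ _ => pow_nonneg hr _
        simpa only [image_subset_iff] using fun a ha => mk_sub_mem_sectorSet hj ha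

lemma sum_sectorSet_le (hr₀ : 0 ≤ r) (hr₁ : r < 1) :
    ∑ σ ∈ sectorSet j j₀, r ^ (σ.1 + σ.2) ≤ (j + 1) * (r ^ minSectorSum j j₀ / (1 - r)) := by
  set f : ℕ × ℕ → ℕ × ℕ := fun σ => (σ.1, σ.1 + σ.2)
  have hinj : Set.InjOn f (sectorSet j j₀) := fun σ _ τ _ h => by
    simp only [f, Prod.mk.injEq] at h
    ext <;> omega
  have hsub : (sectorSet j j₀).image f ⊆ range (j + 1) ×ˢ Ico (minSectorSum j j₀) (2 * j + 1) :=
    image_subset_iff.2 fun _ hσ => mem_product.2 (mem_range_and_add_mem_Ico_of_mem_sectorSet hσ)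
  calc ∑ σ ∈ sectorSet j j₀, r ^ (σ.1 + σ.2) = ∑ p ∈ (sectorSet j j₀).image f, r ^ p.2 := by
        rw [sum_image hinj]
    _ ≤ ∑ p ∈ range (j + 1) ×ˢ Ico (minSectorSum j j₀) (2 * j + 1), r ^ p.2 :=
        sum_le_sum_of_subset_of_nonneg hsub fun _ _ _ => pow_nonneg hr₀ _
    _ = (j + 1) * ∑ i ∈ Ico (minSectorSum j j₀) (2 * j + 1), r ^ i := by
        simp only [sum_product, sum_const, card_range, nsmul_eq_mul, Nat.cast_add, Nat.cast_one]
    _ ≤ (j + 1) * (r ^ minSectorSum j j₀ / (1 - r)) := by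
        gcongr
        exact geom_sum_Ico_le_of_lt_one hr₀ hr₁

end

/-- Two-sided bound for the tadpole sum (Lemma 5.1, formula (bdtj)):
`c₁ (j+j₀) γ^(−(3j−j₀)/2) ≤ Σ_σ γ^(−(s₊+s₋)) ≤ c₂ (j+j₀) γ^(−(3j−j₀)/2)`. -/
theorem tadpole_sector_sum_two_sided (γ : ℝ) (hγ : 10 ≤ γ) :
    ∃ c₁ c₂ : ℝ, 0 < c₁ ∧ 0 < c₂ ∧
      ∀ j₀ : ℕ, 1 ≤ j₀ → ∀ j : ℕ, j₀ < j →
        c₁ * ((j : ℝ) + (j₀ : ℝ)) * γ ^ (-((3 * (j : ℝ) - (j₀ : ℝ)) / 2))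
          ≤ ∑ σ ∈ sectorSet j j₀, γ ^ (-((σ.1 : ℝ) + (σ.2 : ℝ))) ∧
        ∑ σ ∈ sectorSet j j₀, γ ^ (-((σ.1 : ℝ) + (σ.2 : ℝ)))
          ≤ c₂ * ((j : ℝ) + (j₀ : ℝ)) * γ ^ (-((3 * (j : ℝ) - (j₀ : ℝ)) / 2)) := by
  have hγ₀ : 0 < γ := by linarith
  have hγ₁ : 1 ≤ γ := by linarith
  have hr : γ⁻¹ < 1 := inv_lt_one_of_one_lt₀ (by linarith)
  have hγ_pow (n : ℕ) : γ ^ (-(n : ℝ)) = γ⁻¹ ^ n := by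
    rw [Real.rpow_neg hγ₀.le, Real.rpow_natCast, inv_pow]
  refine ⟨γ ^ (-(1 / 2 : ℝ)) / 2, (1 - γ⁻¹)⁻¹, by positivity, inv_pos.2 (sub_pos.2 hr), ?_⟩
  intro j₀ hj₀ j hj
  set A := (3 * (j : ℝ) - j₀) / 2
  set k := minSectorSum j j₀
  obtain ⟨hAk, hkA⟩ := minSectorSum_cast_bounds (j := j) (j₀ := j₀) (by omega)
  have hsum : ∑ σ ∈ sectorSet j j₀, γ ^ (-((σ.1 : ℝ) + σ.2))
      = ∑ σ ∈ sectorSet j j₀, γ⁻¹ ^ (σ.1 + σ.2) :=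
    sum_congr rfl fun σ _ => by rw [← Nat.cast_add, hγ_pow]
  rw [hsum]
  constructor
  · calc γ ^ (-(1 / 2 : ℝ)) / 2 * ((j : ℝ) + j₀) * γ ^ (-A)
        = ((j : ℝ) + j₀) / 2 * γ ^ (-(A + 1 / 2)) := by
          rw [neg_add, Real.rpow_add hγ₀]; ring
      _ ≤ ((j : ℝ) + j₀) / 2 * γ ^ (-(k : ℝ)) := by gcongr
      _ ≤ _ := hγ_pow k ▸ half_add_mul_pow_le_sum_sectorSet (by positivity) hj.le
  · calc _ ≤ ((j : ℝ) + 1) * (γ⁻¹ ^ k / (1 - γ⁻¹)) := sum_sectorSet_le (by positivity) hr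
      _ ≤ ((j : ℝ) + j₀) * (γ ^ (-A) / (1 - γ⁻¹)) := by
          have hj₀' : (1 : ℝ) ≤ j₀ := by exact_mod_cast hj₀
          rw [← hγ_pow]
          gcongr
      _ = _ := by ring
end

section
/- Let m be a real number with 0 < m ≤ 1, let R_m(k₁, k₂) = 4·(cos²(k₁/2)·sin²(k₂/2) + sin²(k₁/2)·cos²(k₂/2))^(3/2) / (m·(sin²(k₁/2) + sin²(k₂/2))), and let C_m = {(k₁, k₂) ∈ [0, π]² : 2·cos(k₁/2)·cos(k₂/2) = m}. Set a = 2·arccos(√(m/2)). Then R_m(k₁, k₂) ≥ 2·√(m − m²/2) for every (k₁, k₂) ∈ C_m; moreover (a, a) ∈ C_m and R_m(a, a) = 2·√(m − m²/2), so the minimum of R_m on C_m equals 2·√(m − m²/2) and is attained at the symmetric point (a, a). -/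
/-- Curvature radius `R_m(k₁,k₂)` of the level curve `{2 cos(k₁/2) cos(k₂/2) = m}`
(Proposition 8.1). -/
noncomputable def curvRadius (m k₁ k₂ : ℝ) : ℝ :=
  4 * (Real.cos (k₁ / 2) ^ 2 * Real.sin (k₂ / 2) ^ 2
        + Real.sin (k₁ / 2) ^ 2 * Real.cos (k₂ / 2) ^ 2) ^ ((3 : ℝ) / 2) /
    (m * (Real.sin (k₁ / 2) ^ 2 + Real.sin (k₂ / 2) ^ 2))

/-- The piece of the level curve `{2 cos(k₁/2) cos(k₂/2) = m}` in `[0, π]²`. -/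
def levelCurve (m : ℝ) : Set (ℝ × ℝ) :=
  {p : ℝ × ℝ | p.1 ∈ Set.Icc 0 Real.pi ∧ p.2 ∈ Set.Icc 0 Real.pi ∧
    2 * Real.cos (p.1 / 2) * Real.cos (p.2 / 2) = m}

/-!
Write `x = cos²(k₁/2)`, `y = cos²(k₂/2)` and `t = x + y`. Using `sin² = 1 - cos²`, the
curvature radius becomes `4 A^{3/2} / D` with `A = t - 2xy` and `D = m (2 - t)`. On the level
curve `4xy = m²`, and AM-GM gives `t ≥ 2 √(xy) = m`, which is equivalent both to
`A ≥ m - m²/2` and to `D ≤ 2A`. Hence `R ≥ 4 A √A / (2A) = 2 √A ≥ 2 √(m - m²/2)`, with equality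
when `x = y = m/2`.
-/

open Real Set

lemma rpow_three_halves_eq_mul_sqrt {A : ℝ} (hA : 0 ≤ A) : A ^ ((3 : ℝ) / 2) = A * √A := by
  rw [sqrt_eq_rpow, ← rpow_one_add' hA (by norm_num)]
  norm_num

lemma two_sqrt_le_four_rpow_three_halves_div {v A D : ℝ} (hvA : v ≤ A) (hD : 0 < D)
    (hDA : D ≤ 2 * A) : 2 * √v ≤ 4 * A ^ ((3 : ℝ) / 2) / D := by
  have hA : 0 ≤ A := by linarith
  rw [rpow_three_halves_eq_mul_sqrt hA, le_div_iff₀ hD]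
  calc 2 * √v * D ≤ 2 * √A * (2 * A) := by gcongr
    _ = 4 * (A * √A) := by ring

lemma curvRadius_eq_cos_sq (m k₁ k₂ : ℝ) :
    curvRadius m k₁ k₂ =
      4 * (cos (k₁ / 2) ^ 2 + cos (k₂ / 2) ^ 2 - 2 * cos (k₁ / 2) ^ 2 * cos (k₂ / 2) ^ 2)
        ^ ((3 : ℝ) / 2) / (m * (2 - cos (k₁ / 2) ^ 2 - cos (k₂ / 2) ^ 2)) := by
  unfold curvRadius
  simp only [sin_sq]
  ring_nf

lemma two_sqrt_le_curvRadius {m k₁ k₂ : ℝ} (hm0 : 0 < m) (hm2 : m < 2)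
    (hk : 2 * cos (k₁ / 2) * cos (k₂ / 2) = m) :
    2 * √(m - m ^ 2 / 2) ≤ curvRadius m k₁ k₂ := by
  rw [curvRadius_eq_cos_sq]
  set c₁ := cos (k₁ / 2)
  set c₂ := cos (k₂ / 2)
  have hc₁ : c₁ ^ 2 ≤ 1 := cos_sq_le_one _
  have hc₂ : c₂ ^ 2 ≤ 1 := cos_sq_le_one _
  have hprod : 2 * c₁ ^ 2 * c₂ ^ 2 = m ^ 2 / 2 := by rw [← hk]; ring
  have hAMGM : m ≤ c₁ ^ 2 + c₂ ^ 2 := by nlinarith [sq_nonneg (c₁ - c₂)]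
  have hsum : c₁ ^ 2 + c₂ ^ 2 < 2 := by
    nlinarith [mul_nonneg (sub_nonneg.mpr hc₁) (sub_nonneg.mpr hc₂)]
  apply two_sqrt_le_four_rpow_three_halves_div
  · linarith
  · nlinarith
  · nlinarith

lemma curvRadius_self_of_cos_sq_eq {m k : ℝ} (hm0 : 0 < m) (hm2 : m < 2)
    (hk : cos (k / 2) ^ 2 = m / 2) :
    curvRadius m k k = 2 * √(m - m ^ 2 / 2) := by
  have hv : 0 < m - m ^ 2 / 2 := by nlinarith
  rw [curvRadius_eq_cos_sq, hk,
    show m / 2 + m / 2 - 2 * (m / 2) * (m / 2) = m - m ^ 2 / 2 by ring,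
    show m * (2 - m / 2 - m / 2) = 2 * (m - m ^ 2 / 2) by ring,
    rpow_three_halves_eq_mul_sqrt hv.le, div_eq_iff (by positivity)]
  ring

lemma two_mul_arccos_mem_Icc {x : ℝ} (hx : 0 ≤ x) : 2 * arccos x ∈ Icc 0 π :=
  ⟨by linarith [arccos_nonneg x], by linarith [arccos_le_pi_div_two.mpr hx]⟩

/-- The minimum of the curvature radius on the level curve is `2 √(m − m²/2)`,
attained at the symmetric point `(a, a)` with `a = 2 arccos √(m/2)`
(Proposition 8.1). -/
theorem curvRadius_min
    (m : ℝ) (hm0 : 0 < m) (hm1 : m ≤ 1) :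
    (∀ p ∈ levelCurve m, 2 * Real.sqrt (m - m ^ 2 / 2) ≤ curvRadius m p.1 p.2) ∧
    (2 * Real.arccos (Real.sqrt (m / 2)), 2 * Real.arccos (Real.sqrt (m / 2))) ∈ levelCurve m ∧
    curvRadius m (2 * Real.arccos (Real.sqrt (m / 2))) (2 * Real.arccos (Real.sqrt (m / 2)))
      = 2 * Real.sqrt (m - m ^ 2 / 2) := by
  have hm2 : m < 2 := by linarith
  have hcos : cos (2 * arccos √(m / 2) / 2) = √(m / 2) := by
    rw [mul_div_cancel_left₀ _ two_ne_zero, cos_arccos (by linarith [sqrt_nonneg (m / 2)])]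
    exact sqrt_le_one.mpr (by linarith)
  have hcos_sq : cos (2 * arccos √(m / 2) / 2) ^ 2 = m / 2 := by
    rw [hcos, sq_sqrt (by linarith)]
  have ha := two_mul_arccos_mem_Icc (sqrt_nonneg (m / 2))
  refine ⟨fun p hp ↦ two_sqrt_le_curvRadius hm0 hm2 hp.2.2, ⟨ha, ha, ?_⟩,
    curvRadius_self_of_cos_sq_eq hm0 hm2 hcos_sq⟩
  rw [mul_assoc, ← sq, hcos_sq]
  ring
end
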